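/- arXiv:1011.4829 — 5 statements merged into one kernel-verified Lean document; each statement's English description precedes it below -/
import Mathlib

section
/- For any four real matrices B, C, D, F of compatible dimensions, the nuclear norm of the block matrix [[B, C], [D, F]] is at least the nuclear norm of B: ‖[[B,C],[D,F]]‖_* ≥ ‖B‖_*. -/
open Matrix

/-- The nuclear norm of a real matrix: the sum of its singular values,
i.e. the sum of the square roots of the eigenvalues of `Mᵀ * M`. -/
noncomputable def nuclearNorm {m n : Type*} [Fintype m] [Fintype n] [DecidableEq n]
    (M : Matrix m n ℝ) : ℝ :=
  ∑ i, Real.sqrt ((Matrix.isHermitian_conjTranspose_mul_self M).eigenvalues i)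

/-!
The nuclear norm is dual to the operator norm: `‖M‖_* = max tr(Xᵀ M)` over contractions `X`.
For the upper bound, compute the trace in the orthonormal basis `vᵢ` of right singular vectors
and apply Cauchy–Schwarz to each `⟪X vᵢ, M vᵢ⟫ ≤ ‖M vᵢ‖ = σᵢ`; the maximum is attained at
`X = M V Σ⁻¹ Vᵀ`. If `X` attains it for `B`, then `[[X, 0], [0, 0]]` is again a contraction and
pairs with `[[B, C], [D, F]]` to the same value `tr(Xᵀ B) = ‖B‖_*`.
-/

namespace Matrix

variable {l m m' n n' : Type*} [Fintype l] [Fintype m] [Fintype m'] [Fintype n] [Fintype n']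

theorem mulVec_dotProduct_mulVec {R : Type*} [CommSemiring R] (P : Matrix m n R) (Q : Matrix m l R)
    (x : n → R) (y : l → R) : P *ᵥ x ⬝ᵥ Q *ᵥ y = x ⬝ᵥ (Pᵀ * Q) *ᵥ y := by
  rw [← mulVec_mulVec, dotProduct_mulVec x Pᵀ, vecMul_transpose]

theorem trace_fromBlocks {R : Type*} [AddCommMonoid R] (A : Matrix n n R) (B : Matrix n n' R)
    (C : Matrix n' n R) (D : Matrix n' n' R) : (fromBlocks A B C D).trace = A.trace + D.trace :=
  Fintype.sum_sum_type _

def IsContraction (X : Matrix m n ℝ) : Prop :=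
  ∀ u : n → ℝ, X *ᵥ u ⬝ᵥ X *ᵥ u ≤ u ⬝ᵥ u

theorem IsContraction.mul {X : Matrix m n ℝ} {Y : Matrix n l ℝ} (hX : X.IsContraction)
    (hY : Y.IsContraction) : (X * Y).IsContraction := fun u => by
  rw [← mulVec_mulVec]
  exact (hX _).trans (hY u)

theorem isContraction_of_transpose_mul_self_eq_diagonal [DecidableEq n] {X : Matrix m n ℝ}
    {c : n → ℝ} (hX : Xᵀ * X = diagonal c) (hc : ∀ i, c i ≤ 1) : X.IsContraction := fun u => by
  rw [mulVec_dotProduct_mulVec, hX]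
  simp only [dotProduct, mulVec_diagonal]
  exact Finset.sum_le_sum fun i _ => by nlinarith [mul_self_nonneg (u i), hc i]

theorem isContraction_of_transpose_mul_self_eq_one [DecidableEq n] {X : Matrix m n ℝ}
    (hX : Xᵀ * X = 1) : X.IsContraction :=
  isContraction_of_transpose_mul_self_eq_diagonal (hX.trans diagonal_one.symm) fun _ => le_rfl

theorem IsContraction.fromBlocks_zero {X : Matrix m n ℝ} (hX : X.IsContraction) :
    (fromBlocks X 0 0 0 : Matrix (m ⊕ m') (n ⊕ n') ℝ).IsContraction := fun u => by
  rw [← Sum.elim_comp_inl_inr u, fromBlocks_mulVec]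
  simp only [zero_mulVec, add_zero, Sum.elim_comp_inl, Sum.elim_comp_inr,
    sumElim_dotProduct_sumElim, dotProduct_zero]
  exact le_add_of_le_of_nonneg (hX _) (Finset.sum_nonneg fun i _ => mul_self_nonneg _)

theorem IsContraction.trace_transpose_mul_le [DecidableEq n] {X : Matrix m n ℝ}
    (hX : X.IsContraction) (Y : Matrix m n ℝ) : (Xᵀ * Y).trace ≤ ∑ i, √((Yᵀ * Y) i i) := by
  refine Finset.sum_le_sum fun i _ => ?_
  have hcol : ∑ k, X k i ^ 2 ≤ 1 := by
    have := hX (Pi.single i 1)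
    rw [mulVec_single_one, single_dotProduct, Pi.single_eq_same, one_mul] at this
    simpa [dotProduct, sq] using this
  calc (Xᵀ * Y) i i = ∑ k, X k i * Y k i := rfl
    _ ≤ √(∑ k, X k i ^ 2) * √(∑ k, Y k i ^ 2) := Real.sum_mul_le_sqrt_mul_sqrt _ _ _
    _ ≤ 1 * √(∑ k, Y k i ^ 2) := by gcongr; exact Real.sqrt_le_one.mpr hcol
    _ = √((Yᵀ * Y) i i) := by simp [mul_apply, sq]

section SingularValues

variable [DecidableEq n] (M : Matrix m n ℝ)

noncomputable def rightSingularMatrix : Matrix n n ℝ :=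
  (isHermitian_conjTranspose_mul_self M).eigenvectorUnitary

noncomputable def singularValue (i : n) : ℝ :=
  √((isHermitian_conjTranspose_mul_self M).eigenvalues i)

theorem nuclearNorm_eq_sum_singularValue : nuclearNorm M = ∑ i, M.singularValue i := rfl

theorem singularValue_nonneg (i : n) : 0 ≤ M.singularValue i := Real.sqrt_nonneg _

theorem rightSingularMatrix_transpose_mul_self :
    M.rightSingularMatrixᵀ * M.rightSingularMatrix = 1 := by
  rw [← conjTranspose_eq_transpose_of_trivial, ← star_eq_conjTranspose]
  exact Unitary.coe_star_mul_self _

theorem rightSingularMatrix_mul_transpose_self :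
    M.rightSingularMatrix * M.rightSingularMatrixᵀ = 1 := by
  rw [← conjTranspose_eq_transpose_of_trivial, ← star_eq_conjTranspose]
  exact Unitary.coe_mul_star_self _

theorem mul_rightSingularMatrix_transpose_mul_self :
    (M * M.rightSingularMatrix)ᵀ * (M * M.rightSingularMatrix) =
      diagonal fun i => M.singularValue i ^ 2 := by
  have h := (isHermitian_conjTranspose_mul_self M).conjStarAlgAut_star_eigenvectorUnitary
  simp only [Unitary.conjStarAlgAut_apply, Unitary.coe_star, star_eq_conjTranspose,
    conjTranspose_eq_transpose_of_trivial, transpose_transpose] at h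
  rw [transpose_mul, Matrix.mul_assoc, ← Matrix.mul_assoc Mᵀ, ← Matrix.mul_assoc]
  simp only [rightSingularMatrix]
  refine h.trans (congrArg diagonal (funext fun i => ?_))
  exact (Real.sq_sqrt ((posSemidef_conjTranspose_mul_self M).eigenvalues_nonneg i)).symm

end SingularValues

theorem IsContraction.trace_transpose_mul_le_nuclearNorm [DecidableEq n] {X : Matrix m n ℝ}
    (hX : X.IsContraction) (M : Matrix m n ℝ) : (Xᵀ * M).trace ≤ nuclearNorm M := by
  set V := M.rightSingularMatrix
  have hXV : (X * V).IsContraction :=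
    hX.mul (isContraction_of_transpose_mul_self_eq_one M.rightSingularMatrix_transpose_mul_self)
  calc (Xᵀ * M).trace = ((X * V)ᵀ * (M * V)).trace := by
        rw [transpose_mul, Matrix.mul_assoc, ← Matrix.mul_assoc Xᵀ, trace_mul_comm Vᵀ,
          Matrix.mul_assoc (Xᵀ * M), M.rightSingularMatrix_mul_transpose_self, Matrix.mul_one]
    _ ≤ ∑ i, √(((M * V)ᵀ * (M * V)) i i) := hXV.trace_transpose_mul_le _
    _ = nuclearNorm M := by
        rw [mul_rightSingularMatrix_transpose_mul_self]
        simp [Real.sqrt_sq, singularValue_nonneg, nuclearNorm_eq_sum_singularValue]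

theorem exists_isContraction_trace_transpose_mul_eq_nuclearNorm [DecidableEq n]
    (M : Matrix m n ℝ) : ∃ X : Matrix m n ℝ, X.IsContraction ∧ (Xᵀ * M).trace = nuclearNorm M := by
  set V := M.rightSingularMatrix
  set σ := M.singularValue
  have hMV := M.mul_rightSingularMatrix_transpose_mul_self
  -- `σ⁻¹` vanishes where `σ` does, so `Xᵀ X` is diagonal with entries `(σᵢ σᵢ⁻¹)² ∈ {0, 1}`.
  refine ⟨M * V * diagonal σ⁻¹ * Vᵀ, IsContraction.mul ?_ ?_, ?_⟩
  · refine isContraction_of_transpose_mul_self_eq_diagonal (c := fun i => (σ i * (σ i)⁻¹) ^ 2)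
      ?_ fun i => ?_
    · rw [transpose_mul, diagonal_transpose, Matrix.mul_assoc, ← Matrix.mul_assoc _ (M * V), hMV,
        diagonal_mul_diagonal, diagonal_mul_diagonal]
      congr 1; ext i; simp only [Pi.inv_apply]; ring
    · rcases eq_or_ne (σ i) 0 with h | h <;> simp [h]
  · exact isContraction_of_transpose_mul_self_eq_one (by
      rw [transpose_transpose, M.rightSingularMatrix_mul_transpose_self])
  · have hX : (M * V * diagonal σ⁻¹ * Vᵀ)ᵀ * M = V * (diagonal σ⁻¹ * (M * V)ᵀ * M) := by
      simp only [transpose_mul, transpose_transpose, diagonal_transpose, Matrix.mul_assoc]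
    rw [hX, trace_mul_comm]
    simp only [Matrix.mul_assoc]
    rw [hMV, diagonal_mul_diagonal, trace_diagonal, nuclearNorm_eq_sum_singularValue]
    simp only [Pi.inv_apply, sq, ← mul_assoc]
    exact Finset.sum_congr rfl fun i _ => inv_mul_mul_self (σ i)

end Matrix

theorem stmt_1 {m m' n n' : Type*} [Fintype m] [Fintype m'] [Fintype n] [Fintype n']
    [DecidableEq n] [DecidableEq n']
    (B : Matrix m n ℝ) (C : Matrix m n' ℝ) (D : Matrix m' n ℝ) (F : Matrix m' n' ℝ) :
    nuclearNorm B ≤ nuclearNorm (Matrix.fromBlocks B C D F) := by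
  obtain ⟨X, hX, hXB⟩ := exists_isContraction_trace_transpose_mul_eq_nuclearNorm B
  calc nuclearNorm B
        = ((fromBlocks X 0 0 0 : Matrix (m ⊕ m') (n ⊕ n') ℝ)ᵀ * fromBlocks B C D F).trace := by
        rw [fromBlocks_transpose, fromBlocks_multiply, trace_fromBlocks]
        simp [hXB]
    _ ≤ nuclearNorm (fromBlocks B C D F) :=
        hX.fromBlocks_zero.trace_transpose_mul_le_nuclearNorm _
end

section
/- Let A ≠ 0 and X be real matrices with column space of X contained in column space of A, and let [X, A] = U Σ V^T be a skinny SVD with V partitioned as V = [V_X; V_A] so that A = U Σ V_A^T. Then V_A^T has full row rank, i.e., V_A^T V_A is invertible. -/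
open Matrix

/-!
Cancelling `U Σ` in `U Σ V_Xᵀ = X = A Z = U Σ V_Aᵀ Z` gives `V_X = Zᵀ V_A`, so
`1 = V_Xᵀ V_X + V_Aᵀ V_A = (V_Xᵀ Zᵀ + V_Aᵀ) V_A`. Thus `V_A` has a left inverse, hence
trivial kernel, and its Gram matrix `V_Aᵀ V_A` is positive definite.
-/

namespace Matrix

variable {l m n R : Type*} [Fintype m] [Fintype n] [DecidableEq n]

theorem eq_of_mul_eq_mul_of_mul_eq_one [Semiring R] {L : Matrix n m R} {B : Matrix m n R}
    (hLB : L * B = 1) {M N : Matrix n l R} (h : B * M = B * N) : M = N := by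
  rw [← Matrix.one_mul M, ← Matrix.one_mul N, ← hLB, Matrix.mul_assoc, Matrix.mul_assoc, h]

theorem mulVec_injective_of_mul_eq_one [CommSemiring R] {L : Matrix n m R} {B : Matrix m n R}
    (hLB : L * B = 1) : Function.Injective B.mulVec := fun v w h => by
  simpa only [mulVec_mulVec, hLB, one_mulVec] using congrArg L.mulVec h

theorem diagonal_inv_mul_transpose_mul_mul_diagonal [Field R] {U : Matrix m n R} {σ : n → R}
    (hU : Uᵀ * U = 1) (hσ : ∀ i, σ i ≠ 0) :
    diagonal σ⁻¹ * Uᵀ * (U * diagonal σ) = 1 := by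
  rw [Matrix.mul_assoc, ← Matrix.mul_assoc Uᵀ, hU, Matrix.one_mul, diagonal_mul_diagonal,
    ← diagonal_one]
  exact congrArg diagonal (funext fun i => inv_mul_cancel₀ (hσ i))

end Matrix

theorem stmt_8_general {p q s : Type*} [Fintype p] [Fintype q] [Fintype s]
    {r : ℕ}
    (X : Matrix p q ℝ) (A : Matrix p s ℝ)
    (hspan : ∃ Z : Matrix s q ℝ, X = A * Z)
    (U : Matrix p (Fin r) ℝ) (σ : Fin r → ℝ)
    (VX : Matrix q (Fin r) ℝ) (VA : Matrix s (Fin r) ℝ)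
    (hσ : ∀ i, 0 < σ i)
    (hU : Uᵀ * U = 1) (hV : VXᵀ * VX + VAᵀ * VA = 1)
    (hX : X = U * Matrix.diagonal σ * VXᵀ) (hA' : A = U * Matrix.diagonal σ * VAᵀ) :
    IsUnit (VAᵀ * VA) := by
  obtain ⟨Z, hZ⟩ := hspan
  have hVX : VX = Zᵀ * VA := by
    have hcancel := diagonal_inv_mul_transpose_mul_mul_diagonal hU fun i => (hσ i).ne'
    have h : VXᵀ = VAᵀ * Z := eq_of_mul_eq_mul_of_mul_eq_one hcancel <| by
      rw [← hX, hZ, hA', Matrix.mul_assoc]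
    simpa only [transpose_mul, transpose_transpose] using congrArg transpose h
  have hleft : (VXᵀ * Zᵀ + VAᵀ) * VA = 1 := by
    rw [← hV, Matrix.add_mul, Matrix.mul_assoc, ← hVX]
  have hpos := PosDef.conjTranspose_mul_self VA (mulVec_injective_of_mul_eq_one hleft)
  simpa only [conjTranspose_eq_transpose_of_trivial] using hpos.isUnit

theorem stmt_8 {p q s : Type*} [Fintype p] [Fintype q] [Fintype s]
    [DecidableEq q] [DecidableEq s] {r : ℕ}
    (X : Matrix p q ℝ) (A : Matrix p s ℝ)
    (hA : A ≠ 0) (hspan : ∃ Z : Matrix s q ℝ, X = A * Z)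
    (U : Matrix p (Fin r) ℝ) (σ : Fin r → ℝ)
    (VX : Matrix q (Fin r) ℝ) (VA : Matrix s (Fin r) ℝ)
    (hσ : ∀ i, 0 < σ i)
    (hU : Uᵀ * U = 1) (hV : VXᵀ * VX + VAᵀ * VA = 1)
    (hX : X = U * Matrix.diagonal σ * VXᵀ) (hA' : A = U * Matrix.diagonal σ * VAᵀ) :
    IsUnit (VAᵀ * VA) :=
  stmt_8_general X A hspan U σ VX VA hσ hU hV hX hA'
end

section
/- Suppose A is a real matrix of full row rank and X is any matrix with the same number of rows as A. Then Z* = A^T (A A^T)^{-1} X is the unique minimizer of ‖Z‖_* subject to X = A Z. -/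
open Matrix

/-!
Every solution of `X = A Z` is `Z₀ + D` with `A D = 0`, and `Z₀ = Aᵀ W` lies in the row space of
`A`, so `Z₀ᵀ D = 0` and `(Z₀ + D)ᵀ (Z₀ + D) = Z₀ᵀ Z₀ + Dᵀ D ≥ Z₀ᵀ Z₀`. The nuclear norm is
`tr √(Zᵀ Z)` and the matrix square root is operator monotone, so `‖Z₀‖_* ≤ ‖Z₀ + D‖_*`; equality
forces `√(Z₀ᵀ Z₀) = √((Z₀ + D)ᵀ (Z₀ + D))` (a positive semidefinite matrix of trace zero vanishes),
hence `Dᵀ D = 0` and `D = 0`.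
-/

open scoped MatrixOrder

namespace Matrix

variable {n : Type*} [Fintype n] [DecidableEq n]

lemma le_of_sq_le_sq {S T : Matrix n n ℝ} (hS : 0 ≤ S) (hT : 0 ≤ T) (h : S ^ 2 ≤ T ^ 2) :
    S ≤ T := by
  rw [nonneg_iff_posSemidef] at hS hT
  have hTS : (T - S).IsHermitian := hT.1.sub hS.1
  rw [le_iff, hTS.posSemidef_iff_eigenvalues_nonneg]
  intro i
  by_contra! ht
  replace ht : hTS.eigenvalues i < 0 := ht
  set t := hTS.eigenvalues i
  set v : n → ℝ := ⇑(hTS.eigenvectorBasis i)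
  have hv : (T - S) *ᵥ v = t • v := hTS.mulVec_eigenvectorBasis i
  have hvv : v ⬝ᵥ v = 1 := by
    have := orthonormal_iff_ite.mp hTS.eigenvectorBasis.orthonormal i i
    rw [EuclideanSpace.inner_eq_star_dotProduct] at this
    simpa using this
  -- `T² - S² = T (T - S) + (T - S) S`, whose quadratic form at `v` is `t (vᵀ T v + vᵀ S v)`.
  have hsplit : v ⬝ᵥ (T ^ 2 - S ^ 2) *ᵥ v = t * (v ⬝ᵥ T *ᵥ v + v ⬝ᵥ S *ᵥ v) := by
    have : T ^ 2 - S ^ 2 = T * (T - S) + (T - S) * S := by noncomm_ring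
    have hvS : v ᵥ* (T - S) = t • v := by
      rw [← mulVec_transpose, ← conjTranspose_eq_transpose_of_trivial, hTS.eq, hv]
    rw [this, add_mulVec, dotProduct_add, ← mulVec_mulVec, hv, mulVec_smul, dotProduct_smul,
      ← mulVec_mulVec, dotProduct_mulVec v (T - S), hvS, smul_dotProduct, smul_eq_mul, smul_eq_mul]
    ring
  have hC : 0 ≤ v ⬝ᵥ (T ^ 2 - S ^ 2) *ᵥ v := by
    simpa using (le_iff.mp h).dotProduct_mulVec_nonneg v
  have hTv : 0 ≤ v ⬝ᵥ T *ᵥ v := by simpa using hT.dotProduct_mulVec_nonneg v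
  have hSv : 0 ≤ v ⬝ᵥ S *ᵥ v := by simpa using hS.dotProduct_mulVec_nonneg v
  have hTSv : v ⬝ᵥ (T - S) *ᵥ v = t := by rw [hv, dotProduct_smul, hvv, smul_eq_mul, mul_one]
  rw [sub_mulVec, dotProduct_sub] at hTSv
  nlinarith

lemma PosSemidef.trace_sqrt {S : Matrix n n ℝ} (hS : S.PosSemidef) :
    (CFC.sqrt S).trace = ∑ i, √(hS.1.eigenvalues i) := by
  rw [CFC.sqrt_eq_real_sqrt S hS.nonneg, cfcₙ_eq_cfc, hS.1.cfc_eq, IsHermitian.cfc,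
    Unitary.conjStarAlgAut_apply, trace_mul_cycle, Unitary.coe_star_mul_self, one_mul,
    trace_diagonal]
  rfl

lemma sqrt_le_sqrt {B C : Matrix n n ℝ} (hB : 0 ≤ B) (h : B ≤ C) :
    CFC.sqrt B ≤ CFC.sqrt C := by
  refine le_of_sq_le_sq (CFC.sqrt_nonneg B) (CFC.sqrt_nonneg C) ?_
  rwa [CFC.sq_sqrt B hB, CFC.sq_sqrt C (hB.trans h)]

lemma trace_sqrt_le_trace_sqrt {B C : Matrix n n ℝ} (hB : 0 ≤ B) (h : B ≤ C) :
    (CFC.sqrt B).trace ≤ (CFC.sqrt C).trace := by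
  rw [← sub_nonneg, ← trace_sub]
  exact (le_iff.mp (sqrt_le_sqrt hB h)).trace_nonneg

lemma eq_of_trace_sqrt_eq {B C : Matrix n n ℝ} (hB : 0 ≤ B) (h : B ≤ C)
    (htr : (CFC.sqrt B).trace = (CFC.sqrt C).trace) : B = C := by
  have hsqrt : CFC.sqrt C - CFC.sqrt B = 0 :=
    (le_iff.mp (sqrt_le_sqrt hB h)).trace_eq_zero_iff.mp (by rw [trace_sub, htr, sub_self])
  rw [← CFC.sq_sqrt B hB, ← CFC.sq_sqrt C (hB.trans h), sub_eq_zero.mp hsqrt]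

lemma isUnit_det_of_rank_eq_card {K : Type*} [Field K] {S : Matrix n n K}
    (h : S.rank = Fintype.card n) : IsUnit S.det := by
  rw [← isUnit_iff_isUnit_det, ← mulVec_surjective_iff_isUnit]
  exact LinearMap.range_eq_top.mp <|
    Submodule.eq_top_of_finrank_eq (h.trans (Module.finrank_fintype_fun_eq_card K).symm)

end Matrix

lemma nuclearNorm_eq_trace_sqrt {m n : Type*} [Fintype m] [Fintype n] [DecidableEq n]
    (M : Matrix m n ℝ) : nuclearNorm M = (CFC.sqrt (Mᴴ * M)).trace :=
  (posSemidef_conjTranspose_mul_self M).trace_sqrt.symm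

lemma conjTranspose_mul_self_add_of_conjTranspose_mul_eq_zero {n q : Type*} [Fintype n]
    {M D : Matrix n q ℝ} (hMD : Mᴴ * D = 0) :
    (M + D)ᴴ * (M + D) = Mᴴ * M + Dᴴ * D := by
  have hDM : Dᴴ * M = 0 := by
    rw [← conjTranspose_conjTranspose M, ← conjTranspose_mul, hMD, conjTranspose_zero]
  rw [conjTranspose_add, Matrix.add_mul, Matrix.mul_add, Matrix.mul_add, hMD, hDM, add_zero,
    zero_add]

section OrthogonalPerturbation

variable {n q : Type*} [Fintype n] [Fintype q] [DecidableEq q] {M D : Matrix n q ℝ}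

lemma nuclearNorm_le_nuclearNorm_add (hMD : Mᴴ * D = 0) :
    nuclearNorm M ≤ nuclearNorm (M + D) := by
  rw [nuclearNorm_eq_trace_sqrt, nuclearNorm_eq_trace_sqrt,
    conjTranspose_mul_self_add_of_conjTranspose_mul_eq_zero hMD]
  exact trace_sqrt_le_trace_sqrt (posSemidef_conjTranspose_mul_self M).nonneg
    (le_add_of_nonneg_right (posSemidef_conjTranspose_mul_self D).nonneg)

lemma eq_zero_of_nuclearNorm_add_eq (hMD : Mᴴ * D = 0)
    (h : nuclearNorm (M + D) = nuclearNorm M) : D = 0 := by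
  rw [nuclearNorm_eq_trace_sqrt, nuclearNorm_eq_trace_sqrt,
    conjTranspose_mul_self_add_of_conjTranspose_mul_eq_zero hMD] at h
  have hself := eq_of_trace_sqrt_eq (posSemidef_conjTranspose_mul_self M).nonneg
    (le_add_of_nonneg_right (posSemidef_conjTranspose_mul_self D).nonneg) h.symm
  exact conjTranspose_mul_self_eq_zero.mp (left_eq_add.mp hself)

end OrthogonalPerturbation

theorem stmt_10 {m n q : Type*} [Fintype m] [Fintype n] [Fintype q]
    [DecidableEq m] [DecidableEq n] [DecidableEq q]
    (A : Matrix m n ℝ) (X : Matrix m q ℝ)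
    (hA : A.rank = Fintype.card m) :
    X = A * (Aᵀ * (A * Aᵀ)⁻¹ * X) ∧
    (∀ Z : Matrix n q ℝ, X = A * Z →
      nuclearNorm (Aᵀ * (A * Aᵀ)⁻¹ * X) ≤ nuclearNorm Z) ∧
    (∀ Z : Matrix n q ℝ, X = A * Z →
      nuclearNorm Z = nuclearNorm (Aᵀ * (A * Aᵀ)⁻¹ * X) →
      Z = Aᵀ * (A * Aᵀ)⁻¹ * X) := by
  have hU : IsUnit (A * Aᵀ).det :=
    isUnit_det_of_rank_eq_card (by rw [rank_self_mul_transpose, hA])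
  set Z₀ := Aᵀ * (A * Aᵀ)⁻¹ * X
  have hfeas : A * Z₀ = X := by
    simp only [Z₀, ← Matrix.mul_assoc]
    rw [mul_nonsing_inv _ hU, Matrix.one_mul]
  have horth : ∀ Z, X = A * Z → Z₀ᴴ * (Z - Z₀) = 0 := fun Z hZ => by
    rw [conjTranspose_eq_transpose_of_trivial, Matrix.transpose_mul, Matrix.transpose_mul,
      transpose_transpose]
    simp only [Matrix.mul_assoc, Matrix.mul_sub, hfeas, ← hZ, sub_self]
  refine ⟨hfeas.symm, fun Z hZ => ?_, fun Z hZ h => ?_⟩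
  · simpa using nuclearNorm_le_nuclearNorm_add (horth Z hZ)
  · exact sub_eq_zero.mp (eq_zero_of_nuclearNorm_add_eq (horth Z hZ) (by simpa using h))
end

section
/- Let X ≠ 0 be a real matrix with skinny SVD X = U_X Σ_X V_X^T. Then Z* = V_X V_X^T (the shape interaction matrix of X) is the unique minimizer of ‖Z‖_* subject to X = X Z. -/
open Matrix

/-!
Since `Σ_X` is invertible and `U_Xᵀ U_X = 1`, the constraint `X = X Z` forces `V_Xᵀ Z = V_Xᵀ`,
so the orthogonal projection `P = V_X V_Xᵀ` satisfies `P Z = P`. For an orthonormal eigenbasis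
`(v i)` of `Zᵀ Z` we have `‖Z‖_* = ∑ ‖Z v i‖`, whereas by Cauchy–Schwarz
`tr P = ∑ ⟪v i, P v i⟫ = ∑ ⟪P v i, Z v i⟫ ≤ ∑ ‖P v i‖ ‖Z v i‖ ≤ ∑ ‖Z v i‖`, and `tr P = ‖P‖_*`.
Equality forces `Z v i = P v i` for every `i`, hence `Z = P`.
-/

open scoped InnerProductSpace

namespace LinearMap.IsSymmetricProjection

variable {E ι : Type*} [NormedAddCommGroup E] [InnerProductSpace ℝ E] [Fintype ι]
  {P Z : E →ₗ[ℝ] E}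

theorem inner_self_apply (hP : P.IsSymmetricProjection) (v : E) :
    ⟪v, P v⟫_ℝ = ‖P v‖ ^ 2 := by
  rw [← real_inner_self_eq_norm_sq, hP.isSymmetric, ← Module.End.mul_apply,
    hP.isIdempotentElem.eq]

theorem norm_apply_le (hP : P.IsSymmetricProjection) (v : E) : ‖P v‖ ≤ ‖v‖ := by
  have h : ‖P v‖ ^ 2 ≤ ‖v‖ * ‖P v‖ := hP.inner_self_apply v ▸ real_inner_le_norm v (P v)
  nlinarith [norm_nonneg (P v), norm_nonneg v]

theorem inner_self_apply_eq_inner (hP : P.IsSymmetricProjection) (hPZ : P * Z = P) (v : E) :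
    ⟪v, P v⟫_ℝ = ⟪P v, Z v⟫_ℝ := by
  rw [hP.isSymmetric, ← Module.End.mul_apply, hPZ]

theorem inner_self_apply_le_norm (hP : P.IsSymmetricProjection) (hPZ : P * Z = P) {v : E}
    (hv : ‖v‖ = 1) : ⟪v, P v⟫_ℝ ≤ ‖Z v‖ := by
  have hsq := hP.inner_self_apply v
  have hCS : ⟪v, P v⟫_ℝ ≤ ‖P v‖ * ‖Z v‖ :=
    hP.inner_self_apply_eq_inner hPZ v ▸ real_inner_le_norm _ _
  have hle := hP.norm_apply_le v
  nlinarith [norm_nonneg (P v), norm_nonneg (Z v)]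

theorem apply_eq_of_inner_self_apply_eq_norm (hP : P.IsSymmetricProjection) (hPZ : P * Z = P)
    {v : E} (hv : ‖v‖ = 1) (h : ⟪v, P v⟫_ℝ = ‖Z v‖) : Z v = P v := by
  have hsq := hP.inner_self_apply v
  have hcross := hP.inner_self_apply_eq_inner hPZ v
  have hCS : ⟪v, P v⟫_ℝ ≤ ‖P v‖ * ‖Z v‖ := hcross ▸ real_inner_le_norm _ _
  have hle := hP.norm_apply_le v
  have hdist : ‖Z v - P v‖ ^ 2 = ‖Z v‖ ^ 2 - ‖P v‖ ^ 2 := by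
    rw [norm_sub_sq_real, real_inner_comm, ← hcross, hsq]; ring
  -- Cauchy–Schwarz gives `a² ≤ a · a²` for `a = ‖P v‖ ≤ 1`, so `a ∈ {0, 1}`.
  have hcube : ‖P v‖ ^ 2 * (1 - ‖P v‖) = 0 := by
    nlinarith [norm_nonneg (P v), mul_nonneg (sq_nonneg ‖P v‖) (sub_nonneg.2 (hv ▸ hle))]
  rw [← sub_eq_zero, ← norm_eq_zero, ← pow_eq_zero_iff two_ne_zero, hdist, ← h, hsq]
  linear_combination (-‖P v‖ - 1) * hcube

theorem trace_le_sum_norm (hP : P.IsSymmetricProjection) (hPZ : P * Z = P)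
    (b : OrthonormalBasis ι ℝ E) : P.trace ℝ E ≤ ∑ i, ‖Z (b i)‖ := by
  rw [P.trace_eq_sum_inner b]
  exact Finset.sum_le_sum fun i _ => hP.inner_self_apply_le_norm hPZ (b.orthonormal.1 i)

theorem eq_of_trace_eq_sum_norm (hP : P.IsSymmetricProjection) (hPZ : P * Z = P)
    (b : OrthonormalBasis ι ℝ E) (h : P.trace ℝ E = ∑ i, ‖Z (b i)‖) : Z = P := by
  rw [P.trace_eq_sum_inner b] at h
  have hterm := (Finset.sum_eq_sum_iff_of_le fun i _ =>
    hP.inner_self_apply_le_norm hPZ (b.orthonormal.1 i)).mp h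
  refine b.toBasis.ext fun i => ?_
  rw [b.coe_toBasis]
  exact hP.apply_eq_of_inner_self_apply_eq_norm hPZ (b.orthonormal.1 i)
    (hterm i (Finset.mem_univ i))

end LinearMap.IsSymmetricProjection

namespace Matrix

section Spectral

variable {m n : Type*} [Fintype m] [Fintype n] [DecidableEq n]

theorem trace_eq_trace_toEuclideanLin (A : Matrix n n ℝ) :
    A.trace = (toEuclideanLin A).trace ℝ _ := by
  rw [LinearMap.trace_eq_matrix_trace ℝ (EuclideanSpace.basisFun n ℝ).toBasis,
    toEuclideanLin_eq_toLin_orthonormal, LinearMap.toMatrix_toLin]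

theorem IsHermitian.toEuclideanLin_eigenvectorBasis {A : Matrix n n ℝ} (hA : A.IsHermitian)
    (i : n) :
    toEuclideanLin A (hA.eigenvectorBasis i) = hA.eigenvalues i • hA.eigenvectorBasis i := by
  ext j
  simp [toLpLin_apply, hA.mulVec_eigenvectorBasis]

theorem norm_toEuclideanLin_eigenvectorBasis (M : Matrix m n ℝ) (i : n) :
    ‖toEuclideanLin M ((isHermitian_conjTranspose_mul_self M).eigenvectorBasis i)‖ =
      √((isHermitian_conjTranspose_mul_self M).eigenvalues i) := by
  classical
  set hA := isHermitian_conjTranspose_mul_self M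
  set v := hA.eigenvectorBasis i
  have hsq : ‖toEuclideanLin M v‖ ^ 2 = hA.eigenvalues i := by
    rw [← real_inner_self_eq_norm_sq, ← LinearMap.adjoint_inner_right,
      ← toEuclideanLin_conjTranspose_eq_adjoint, ← LinearMap.comp_apply, ← toLpLin_mul_same,
      hA.toEuclideanLin_eigenvectorBasis, real_inner_smul_right, real_inner_self_eq_norm_sq,
      hA.eigenvectorBasis.orthonormal.1 i, one_pow, mul_one]
  rw [← hsq, Real.sqrt_sq (norm_nonneg _)]

theorem nuclearNorm_eq_sum_norm (M : Matrix m n ℝ) :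
    nuclearNorm M =
      ∑ i, ‖toEuclideanLin M ((isHermitian_conjTranspose_mul_self M).eigenvectorBasis i)‖ := by
  simp only [nuclearNorm, norm_toEuclideanLin_eigenvectorBasis]

end Spectral

section StarProjection

variable {n : Type*} [Fintype n] [DecidableEq n] {P Z : Matrix n n ℝ}

theorem toEuclideanLin_mul (A B : Matrix n n ℝ) :
    toEuclideanLin (A * B) = toEuclideanLin A * toEuclideanLin B :=
  toLpLin_mul_same ..

theorem IsStarProjection.isSymmetricProjection_toEuclideanLin (hP : IsStarProjection P) :
    (toEuclideanLin P).IsSymmetricProjection where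
  isIdempotentElem := by
    rw [IsIdempotentElem, ← toEuclideanLin_mul, hP.isIdempotentElem.eq]
  isSymmetric := isSymmetric_toEuclideanLin_iff.mpr hP.isSelfAdjoint

theorem trace_le_nuclearNorm (hP : IsStarProjection P) (hPZ : P * Z = P) :
    P.trace ≤ nuclearNorm Z := by
  rw [trace_eq_trace_toEuclideanLin, nuclearNorm_eq_sum_norm]
  exact hP.isSymmetricProjection_toEuclideanLin.trace_le_sum_norm
    (by rw [← toEuclideanLin_mul, hPZ]) _

theorem eq_of_nuclearNorm_eq_trace (hP : IsStarProjection P) (hPZ : P * Z = P)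
    (h : nuclearNorm Z = P.trace) : Z = P := by
  rw [trace_eq_trace_toEuclideanLin, nuclearNorm_eq_sum_norm] at h
  exact toEuclideanLin.injective <| hP.isSymmetricProjection_toEuclideanLin.eq_of_trace_eq_sum_norm
    (by rw [← toEuclideanLin_mul, hPZ]) _ h.symm

theorem IsStarProjection.nuclearNorm_eq_trace (hP : IsStarProjection P) :
    nuclearNorm P = P.trace := by
  set hA := isHermitian_conjTranspose_mul_self P
  have hPP : Pᴴ * P = P := (congrArg (· * P) hP.isSelfAdjoint).trans hP.isIdempotentElem.eq
  rw [trace_eq_trace_toEuclideanLin, nuclearNorm_eq_sum_norm,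
    LinearMap.trace_eq_sum_inner _ hA.eigenvectorBasis]
  refine Finset.sum_congr rfl fun i _ => ?_
  have hPb :
      toEuclideanLin P (hA.eigenvectorBasis i) = hA.eigenvalues i • hA.eigenvectorBasis i :=
    (congrArg (fun A => toEuclideanLin A (hA.eigenvectorBasis i)) hPP).symm.trans
      (hA.toEuclideanLin_eigenvectorBasis i)
  rw [hPb, norm_smul, real_inner_smul_right, real_inner_self_eq_norm_sq,
    hA.eigenvectorBasis.orthonormal.1 i,
    Real.norm_of_nonneg (eigenvalues_conjTranspose_mul_self_nonneg P i)]
  ring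

end StarProjection

theorem isStarProjection_mul_transpose {q k : Type*} [Fintype q] [Fintype k] [DecidableEq k]
    {V : Matrix q k ℝ} (hV : Vᵀ * V = 1) : IsStarProjection (V * Vᵀ) where
  isIdempotentElem := by
    rw [IsIdempotentElem, Matrix.mul_assoc, ← Matrix.mul_assoc Vᵀ, hV, Matrix.one_mul]
  isSelfAdjoint := by
    rw [IsSelfAdjoint, star_eq_conjTranspose, conjTranspose_eq_transpose_of_trivial,
      transpose_mul, transpose_transpose]

section SVD

variable {K p q k : Type*} [Field K] [Fintype p] [Fintype k] [DecidableEq k]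

theorem diagonal_inv_mul_transpose_mul_eq {U : Matrix p k K} {σ : k → K} (V : Matrix q k K)
    (hσ : ∀ i, σ i ≠ 0) (hU : Uᵀ * U = 1) :
    diagonal σ⁻¹ * Uᵀ * (U * diagonal σ * Vᵀ) = Vᵀ := by
  have hdiag : diagonal σ⁻¹ * diagonal σ = 1 := by
    rw [diagonal_mul_diagonal, ← diagonal_one]
    exact congrArg diagonal (funext fun i => inv_mul_cancel₀ (hσ i))
  simp only [Matrix.mul_assoc]
  rw [← Matrix.mul_assoc Uᵀ, hU, Matrix.one_mul, ← Matrix.mul_assoc, hdiag, Matrix.one_mul]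

theorem transpose_mul_eq_of_mul_eq [Fintype q] {X : Matrix p q K} {U : Matrix p k K} {σ : k → K}
    {V : Matrix q k K} (hσ : ∀ i, σ i ≠ 0) (hU : Uᵀ * U = 1) (hX : X = U * diagonal σ * Vᵀ)
    {Z : Matrix q q K} (hZ : X = X * Z) : Vᵀ * Z = Vᵀ := by
  rw [← diagonal_inv_mul_transpose_mul_eq V hσ hU, ← hX, Matrix.mul_assoc, ← hZ]

end SVD

end Matrix

theorem stmt_11_general {p q : Type*} [Fintype p] [Fintype q] [DecidableEq q] {r : ℕ}
    (X : Matrix p q ℝ)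
    (UX : Matrix p (Fin r) ℝ) (σ : Fin r → ℝ) (VX : Matrix q (Fin r) ℝ)
    (hσ : ∀ i, 0 < σ i)
    (hU : UXᵀ * UX = 1) (hV : VXᵀ * VX = 1)
    (hX : X = UX * Matrix.diagonal σ * VXᵀ) :
    X = X * (VX * VXᵀ) ∧
    (∀ Z : Matrix q q ℝ, X = X * Z → nuclearNorm (VX * VXᵀ) ≤ nuclearNorm Z) ∧
    (∀ Z : Matrix q q ℝ, X = X * Z →
      nuclearNorm Z = nuclearNorm (VX * VXᵀ) → Z = VX * VXᵀ) := by
  have hP : IsStarProjection (VX * VXᵀ) := isStarProjection_mul_transpose hV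
  have hPZ (Z : Matrix q q ℝ) (hZ : X = X * Z) : VX * VXᵀ * Z = VX * VXᵀ := by
    rw [Matrix.mul_assoc, transpose_mul_eq_of_mul_eq (fun i => (hσ i).ne') hU hX hZ]
  refine ⟨?_, fun Z hZ => ?_, fun Z hZ hnorm => ?_⟩
  · rw [hX, Matrix.mul_assoc (UX * diagonal σ) VXᵀ, ← Matrix.mul_assoc VXᵀ, hV, Matrix.one_mul]
  · exact hP.nuclearNorm_eq_trace ▸ trace_le_nuclearNorm hP (hPZ Z hZ)
  · exact eq_of_nuclearNorm_eq_trace hP (hPZ Z hZ) (hnorm.trans hP.nuclearNorm_eq_trace)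

theorem stmt_11 {p q : Type*} [Fintype p] [Fintype q] [DecidableEq q] {r : ℕ}
    (X : Matrix p q ℝ) (hX0 : X ≠ 0)
    (UX : Matrix p (Fin r) ℝ) (σ : Fin r → ℝ) (VX : Matrix q (Fin r) ℝ)
    (hσ : ∀ i, 0 < σ i)
    (hU : UXᵀ * UX = 1) (hV : VXᵀ * VX = 1)
    (hX : X = UX * Matrix.diagonal σ * VXᵀ) :
    X = X * (VX * VXᵀ) ∧
    (∀ Z : Matrix q q ℝ, X = X * Z → nuclearNorm (VX * VXᵀ) ≤ nuclearNorm Z) ∧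
    (∀ Z : Matrix q q ℝ, X = X * Z →
      nuclearNorm Z = nuclearNorm (VX * VXᵀ) → Z = VX * VXᵀ) :=
  stmt_11_general X UX σ VX hσ hU hV hX
end

section
/- Let U, V, M be real matrices with U^T U = I and V^T V = I, and let [U, U_⊥], [V, V_⊥] be square orthogonal completions of U, V. If Z satisfies U^T Z V = M and ‖Z‖_* = ‖M‖_*, then, writing H = Z − U M V^T, one has U^T H V_⊥ = 0, U_⊥^T H V = 0, and U_⊥^T H V_⊥ = 0. -/
open Matrix

section NuclearNormAux

open Polynomial

variable {m n l : Type*} [Fintype m] [Fintype n] [Fintype l]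
  [DecidableEq m] [DecidableEq n] [DecidableEq l]

/-- `XᵀX` is PSD, real version. -/
lemma psdTT (X : Matrix m n ℝ) : (Xᵀ * X).PosSemidef := by
  rw [← conjTranspose_eq_transpose_of_trivial]
  exact posSemidef_conjTranspose_mul_self X

lemma psdTT' (X : Matrix m n ℝ) : (X * Xᵀ).PosSemidef := by
  rw [← conjTranspose_eq_transpose_of_trivial]
  exact posSemidef_self_mul_conjTranspose X

lemma tmse (X : Matrix m n ℝ) (h : Xᵀ * X = 0) : X = 0 := by
  rw [← conjTranspose_eq_transpose_of_trivial] at h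
  exact conjTranspose_mul_self_eq_zero.mp h

/-- conjugation commutes with polynomial evaluation -/
lemma aeval_conj (Q : Matrix n n ℝ) (D : Matrix n n ℝ) (h1 : Q * Qᵀ = 1) (p : ℝ[X]) :
    Polynomial.aeval (Q * D * Qᵀ) p = Q * Polynomial.aeval D p * Qᵀ := by
  have hpow : ∀ k : ℕ, (Q * D * Qᵀ) ^ k = Q * D ^ k * Qᵀ := by
    intro k
    induction k with
    | zero => simp [h1]
    | succ k ih =>
      rw [pow_succ, ih, pow_succ]
      calc Q * D ^ k * Qᵀ * (Q * D * Qᵀ) = Q * D ^ k * (Qᵀ * Q) * D * Qᵀ := by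
            noncomm_ring
        _ = Q * (D ^ k * D) * Qᵀ := by
            rw [mul_eq_one_comm.mp h1]; noncomm_ring
  induction p using Polynomial.induction_on' with
  | add f g hf hg => simp [map_add, hf, hg, Matrix.mul_add, Matrix.add_mul]
  | monomial k a =>
    simp only [aeval_monomial, hpow, Algebra.algebraMap_eq_smul_one, smul_one_mul,
      Matrix.smul_mul, Matrix.mul_smul]

lemma aeval_diagonal (d : n → ℝ) (p : ℝ[X]) :
    Polynomial.aeval (Matrix.diagonal d) p = Matrix.diagonal (fun i => p.eval (d i)) := by
  induction p using Polynomial.induction_on' with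
  | add f g hf hg => simp [map_add, hf, hg, diagonal_add]
  | monomial k a =>
    simp only [aeval_monomial, Algebra.algebraMap_eq_smul_one, diagonal_pow, smul_one_mul]
    rw [← diagonal_smul]
    congr 1
    ext i j
    simp only [Matrix.diagonal_apply, Pi.smul_apply, Pi.pow_apply, smul_eq_mul, eval_monomial]

section spectral

variable {S : Matrix n n ℝ}

lemma star_coe_eq (hS : S.IsHermitian) :
    star (hS.eigenvectorUnitary : Matrix n n ℝ) = (hS.eigenvectorUnitary : Matrix n n ℝ)ᵀ := by
  rw [Matrix.star_eq_conjTranspose, conjTranspose_eq_transpose_of_trivial]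

lemma QQt (hS : S.IsHermitian) :
    (hS.eigenvectorUnitary : Matrix n n ℝ) * (hS.eigenvectorUnitary : Matrix n n ℝ)ᵀ = 1 := by
  rw [← star_coe_eq hS]
  exact Unitary.mul_star_self_of_mem hS.eigenvectorUnitary.2

lemma QtQ (hS : S.IsHermitian) :
    (hS.eigenvectorUnitary : Matrix n n ℝ)ᵀ * (hS.eigenvectorUnitary : Matrix n n ℝ) = 1 := by
  rw [← star_coe_eq hS]
  exact Unitary.star_mul_self_of_mem hS.eigenvectorUnitary.2

lemma spectral_real (hS : S.IsHermitian) :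
    S = (hS.eigenvectorUnitary : Matrix n n ℝ) * Matrix.diagonal hS.eigenvalues *
      (hS.eigenvectorUnitary : Matrix n n ℝ)ᵀ := by
  conv_lhs => rw [hS.spectral_theorem]
  rw [Unitary.conjStarAlgAut_apply, star_coe_eq hS, RCLike.ofReal_real_eq_id, Function.id_comp]

lemma aeval_hermitian (hS : S.IsHermitian) (p : ℝ[X]) :
    Polynomial.aeval S p = (hS.eigenvectorUnitary : Matrix n n ℝ) *
      Matrix.diagonal (fun i => p.eval (hS.eigenvalues i)) *
      (hS.eigenvectorUnitary : Matrix n n ℝ)ᵀ := by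
  conv_lhs => rw [spectral_real hS]
  rw [aeval_conj _ _ (QQt hS), aeval_diagonal]

open scoped MatrixOrder in
/-- square root of a PSD matrix (`Matrix.PosSemidef.sqrt` was removed from Mathlib). -/
noncomputable def Matrix.PosSemidef.sqrt {A : Matrix n n ℝ} (_hA : A.PosSemidef) :
    Matrix n n ℝ :=
  CFC.sqrt A

open scoped MatrixOrder in
lemma Matrix.PosSemidef.sqrt_eq {A : Matrix n n ℝ} (hA : A.PosSemidef) :
    hA.sqrt = (hA.1.eigenvectorUnitary : Matrix n n ℝ) *
      diagonal (Real.sqrt ∘ hA.1.eigenvalues) *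
      star (hA.1.eigenvectorUnitary : Matrix n n ℝ) := by
  rw [Matrix.PosSemidef.sqrt, CFC.sqrt_eq_cfc, cfc_nnreal_eq_real _ A, hA.1.cfc_eq]
  simp only [IsHermitian.cfc, Unitary.conjStarAlgAut_apply]
  congr 3
  funext i
  simp [Real.coe_sqrt, Real.coe_toNNReal', hA.eigenvalues_nonneg i]

open scoped MatrixOrder in
lemma Matrix.PosSemidef.sqrt_mul_self {A : Matrix n n ℝ} (hA : A.PosSemidef) :
    hA.sqrt * hA.sqrt = A :=
  CFC.sqrt_mul_sqrt_self A hA.nonneg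

open scoped MatrixOrder in
lemma Matrix.PosSemidef.posSemidef_sqrt {A : Matrix n n ℝ} (hA : A.PosSemidef) :
    hA.sqrt.PosSemidef :=
  nonneg_iff_posSemidef.mp (CFC.sqrt_nonneg A)

open scoped MatrixOrder in
lemma Matrix.PosSemidef.eq_sqrt_of_sq_eq {A B : Matrix n n ℝ} (hB : B.PosSemidef)
    (hA : A.PosSemidef) (h : B ^ 2 = A) : B = hA.sqrt :=
  ((CFC.sqrt_eq_iff A B hA.nonneg hB.nonneg).mpr (by rw [← sq]; exact h)).symm

lemma sqrt_eq_aeval (hS : S.PosSemidef) (p : ℝ[X])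
    (hp : ∀ i, p.eval (hS.1.eigenvalues i) = Real.sqrt (hS.1.eigenvalues i)) :
    hS.sqrt = Polynomial.aeval S p := by
  rw [aeval_hermitian hS.1 p]
  rw [Matrix.PosSemidef.sqrt_eq, star_coe_eq hS.1]
  congr 1
  congr 1
  ext i j
  simp [Matrix.diagonal_apply, hp]

lemma trace_conj (Q : Matrix n n ℝ) (D : Matrix n n ℝ) (h2 : Qᵀ * Q = 1) :
    (Q * D * Qᵀ).trace = D.trace := by
  rw [Matrix.trace_mul_cycle, h2, Matrix.one_mul]

lemma trace_sqrt (hS : S.PosSemidef) :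
    hS.sqrt.trace = ∑ i, Real.sqrt (hS.1.eigenvalues i) := by
  rw [Matrix.PosSemidef.sqrt_eq, star_coe_eq hS.1, trace_conj _ _ (QtQ hS.1), Matrix.trace_diagonal]
  simp

lemma trace_eq_sum_eig (hS : S.IsHermitian) : S.trace = ∑ i, hS.eigenvalues i := by
  conv_lhs => rw [spectral_real hS]
  rw [trace_conj _ _ (QtQ hS), Matrix.trace_diagonal]

lemma psd_trace_nonneg (hS : S.PosSemidef) : 0 ≤ S.trace := by
  rw [trace_eq_sum_eig hS.1]
  exact Finset.sum_nonneg fun i _ => hS.eigenvalues_nonneg i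

lemma psd_trace_zero (hS : S.PosSemidef) (h : S.trace = 0) : S = 0 := by
  rw [trace_eq_sum_eig hS.1] at h
  have hz : ∀ i ∈ Finset.univ, hS.1.eigenvalues i = 0 :=
    (Finset.sum_eq_zero_iff_of_nonneg fun i _ => hS.eigenvalues_nonneg i).mp h
  rw [spectral_real hS.1]
  have : Matrix.diagonal hS.1.eigenvalues = 0 := by
    ext i j
    simp only [Matrix.diagonal_apply, Matrix.zero_apply]
    split
    · exact hz _ (Finset.mem_univ _)
    · rfl
  rw [this]
  simp

end spectral

section isom

/-- `V S Vᵀ` is PSD for `S` PSD. -/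
lemma psd_isom {S : Matrix n n ℝ} (hS : S.PosSemidef) (V : Matrix l n ℝ) :
    (V * S * Vᵀ).PosSemidef := by
  rw [← conjTranspose_eq_transpose_of_trivial]
  exact hS.mul_mul_conjTranspose_same V

lemma sqrt_isom {S : Matrix n n ℝ} (hS : S.PosSemidef) (V : Matrix l n ℝ) (hV : Vᵀ * V = 1) :
    (psd_isom hS V).sqrt = V * hS.sqrt * Vᵀ := by
  symm
  apply Matrix.PosSemidef.eq_sqrt_of_sq_eq (psd_isom hS.posSemidef_sqrt V) (psd_isom hS V)
  rw [pow_two]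
  calc V * hS.sqrt * Vᵀ * (V * hS.sqrt * Vᵀ)
      = V * hS.sqrt * (Vᵀ * V) * hS.sqrt * Vᵀ := by simp only [Matrix.mul_assoc]
    _ = V * (hS.sqrt * hS.sqrt) * Vᵀ := by rw [hV, Matrix.mul_one]; simp only [Matrix.mul_assoc]
    _ = V * S * Vᵀ := by rw [hS.sqrt_mul_self]

lemma trace_sqrt_isom {S : Matrix n n ℝ} (hS : S.PosSemidef) (V : Matrix l n ℝ)
    (hV : Vᵀ * V = 1) : (psd_isom hS V).sqrt.trace = hS.sqrt.trace := by
  rw [sqrt_isom hS V hV, Matrix.trace_mul_cycle, hV, Matrix.one_mul]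

end isom

section L1

lemma comm_aeval (A : Matrix m n ℝ) (q : ℝ[X]) :
    A * Polynomial.aeval (Aᵀ * A) q = Polynomial.aeval (A * Aᵀ) q * A := by
  have hpow : ∀ k : ℕ, A * (Aᵀ * A) ^ k = (A * Aᵀ) ^ k * A := by
    intro k
    induction k with
    | zero => simp
    | succ k ih =>
      rw [pow_succ, pow_succ, ← Matrix.mul_assoc, ih]
      simp only [Matrix.mul_assoc]
  induction q using Polynomial.induction_on' with
  | add f g hf hg => simp [map_add, Matrix.mul_add, Matrix.add_mul, hf, hg]
  | monomial k a =>
    simp only [aeval_monomial, Algebra.algebraMap_eq_smul_one, smul_one_mul,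
      Matrix.mul_smul, Matrix.smul_mul, hpow]

/-- trace of sqrt is the same for `AᵀA` and `AAᵀ`. -/
lemma trace_sqrt_comm (A : Matrix m n ℝ) :
    (psdTT A).sqrt.trace = (psdTT' A).sqrt.trace := by
  classical
  set s : Finset ℝ :=
    insert 0 ((Finset.univ.image (psdTT A).1.eigenvalues) ∪
      (Finset.univ.image (psdTT' A).1.eigenvalues)) with hs
  set p : ℝ[X] := Lagrange.interpolate s id Real.sqrt with hpdef
  have hinj : Set.InjOn id (s : Set ℝ) := Function.injective_id.injOn
  have hev : ∀ x ∈ s, p.eval x = Real.sqrt x := fun x hx =>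
    Lagrange.eval_interpolate_at_node Real.sqrt hinj hx
  have h1 : (psdTT A).sqrt = Polynomial.aeval (Aᵀ * A) p := by
    apply sqrt_eq_aeval
    intro i
    exact hev _ (by simp [hs, Finset.mem_insert, Finset.mem_union])
  have h2 : (psdTT' A).sqrt = Polynomial.aeval (A * Aᵀ) p := by
    apply sqrt_eq_aeval
    intro i
    exact hev _ (by simp [hs, Finset.mem_insert, Finset.mem_union])
  have hc0 : p.coeff 0 = 0 := by
    rw [Polynomial.coeff_zero_eq_eval_zero]
    rw [hev 0 (by simp [hs])]
    exact Real.sqrt_zero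
  have hsplit : p = Polynomial.X * p.divX := by
    conv_lhs => rw [← Polynomial.X_mul_divX_add p]
    rw [hc0, map_zero, add_zero]
  rw [h1, h2, hsplit]
  rw [_root_.map_mul, _root_.map_mul, Polynomial.aeval_X, Polynomial.aeval_X]
  rw [Matrix.mul_assoc, comm_aeval, ← Matrix.mul_assoc, Matrix.trace_mul_cycle]

end L1

section mono

variable {S T : Matrix n n ℝ}

lemma star_id (v : n → ℝ) : star v = v := by ext j; simp

lemma psd_quad (hS : S.PosSemidef) (v : n → ℝ) : 0 ≤ v ⬝ᵥ (S *ᵥ v) := by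
  have := hS.dotProduct_mulVec_nonneg v
  rwa [star_id] at this

lemma sqrt_mono (hS : S.PosSemidef) (hT : T.PosSemidef) (h : (T - S).PosSemidef) :
    (hT.sqrt - hS.sqrt).PosSemidef := by
  set A := hS.sqrt with hAdef
  set B := hT.sqrt with hBdef
  have hE : (B - A).IsHermitian := hT.posSemidef_sqrt.1.sub hS.posSemidef_sqrt.1
  have hsym : (B - A)ᵀ = B - A := by
    rw [← conjTranspose_eq_transpose_of_trivial]; exact hE
  apply hE.posSemidef_iff_eigenvalues_nonneg.mpr
  intro i
  by_contra hc
  push_neg at hc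
  rw [Pi.zero_apply] at hc
  set c := hE.eigenvalues i with hcdef
  set v : n → ℝ := ⇑(hE.eigenvectorBasis i) with hvdef
  have hv : (B - A) *ᵥ v = c • v := hE.mulVec_eigenvectorBasis i
  set a := v ⬝ᵥ (A *ᵥ v) with hadef
  set b := v ⬝ᵥ (B *ᵥ v) with hbdef
  have hdec : T - S = B * (B - A) + (B - A) * A := by
    have e1 : B * B = T := hT.sqrt_mul_self
    have e2 : A * A = S := hS.sqrt_mul_self
    rw [← e1, ← e2]
    noncomm_ring
  have hBv : v ⬝ᵥ ((B * (B - A)) *ᵥ v) = c * b := by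
    rw [← Matrix.mulVec_mulVec, hv, Matrix.mulVec_smul, dotProduct_smul, smul_eq_mul]
  have h1 : Matrix.vecMul v (B - A) = c • v := by
    rw [← Matrix.mulVec_transpose, hsym, hv]
  have hAv : v ⬝ᵥ (((B - A) * A) *ᵥ v) = c * a := by
    rw [Matrix.dotProduct_mulVec, ← Matrix.vecMul_vecMul, h1, Matrix.smul_vecMul,
      smul_dotProduct, smul_eq_mul, hadef, Matrix.dotProduct_mulVec]
  have hq : 0 ≤ c * (b + a) := by
    have h0 := psd_quad h v
    rw [hdec, Matrix.add_mulVec, dotProduct_add, hBv, hAv] at h0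
    linarith [h0]
  have ha0 : 0 ≤ a := psd_quad hS.posSemidef_sqrt v
  have hb0 : 0 ≤ b := psd_quad hT.posSemidef_sqrt v
  have hba : b + a ≤ 0 := by nlinarith
  have ha : a = 0 := by linarith
  have hb : b = 0 := by linarith
  have hAv0 : A *ᵥ v = 0 := by
    rw [← hS.posSemidef_sqrt.dotProduct_mulVec_zero_iff v, star_id]
    exact ha.symm ▸ rfl
  have hBv0 : B *ᵥ v = 0 := by
    rw [← hT.posSemidef_sqrt.dotProduct_mulVec_zero_iff v, star_id]
    exact hb.symm ▸ rfl
  have hv0 : c • v = 0 := by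
    rw [← hv, Matrix.sub_mulVec, hAv0, hBv0, sub_zero]
  have hvne : v ≠ 0 := by
    intro h0
    have hnorm := (hE.eigenvectorBasis).orthonormal.1 i
    have : (hE.eigenvectorBasis i) = 0 := by
      ext j
      have := congrFun h0 j
      simpa using this
    rw [this, norm_zero] at hnorm
    norm_num at hnorm
  have : v = 0 := by
    have := smul_eq_zero.mp hv0
    rcases this with h' | h'
    · exact absurd h' (ne_of_lt hc)
    · exact h'
  exact hvne this

lemma trace_sqrt_mono (hS : S.PosSemidef) (hT : T.PosSemidef) (h : (T - S).PosSemidef) :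
    hS.sqrt.trace ≤ hT.sqrt.trace := by
  have := psd_trace_nonneg (sqrt_mono hS hT h)
  rw [Matrix.trace_sub] at this
  linarith

lemma trace_sqrt_rigid (hS : S.PosSemidef) (hT : T.PosSemidef) (h : (T - S).PosSemidef)
    (heq : hS.sqrt.trace = hT.sqrt.trace) : S = T := by
  have hz : (hT.sqrt - hS.sqrt) = 0 := by
    apply psd_trace_zero (sqrt_mono hS hT h)
    rw [Matrix.trace_sub, heq, sub_self]
  have hsq : hS.sqrt = hT.sqrt := by
    have := sub_eq_zero.mp hz
    exact this.symm
  calc S = hS.sqrt * hS.sqrt := (hS.sqrt_mul_self).symm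
    _ = hT.sqrt * hT.sqrt := by rw [hsq]
    _ = T := hT.sqrt_mul_self

end mono

lemma tmse' (X : Matrix m n ℝ) (h : X * Xᵀ = 0) : X = 0 := by
  have h2 : Xᵀᵀ * Xᵀ = 0 := by rwa [Matrix.transpose_transpose]
  have := tmse Xᵀ h2
  rwa [Matrix.transpose_eq_zero] at this

lemma split_psd' {k : Type*} [Fintype k] [DecidableEq k] (X : Matrix k l ℝ) (U : Matrix k m ℝ)
    (Uperp : Matrix k n ℝ) (hUsq : U * Uᵀ + Uperp * Uperpᵀ = 1) :
    Xᵀ * X - (Uᵀ * X)ᵀ * (Uᵀ * X) = (Uperpᵀ * X)ᵀ * (Uperpᵀ * X) := by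
  rw [Matrix.transpose_mul, Matrix.transpose_mul, Matrix.transpose_transpose,
    Matrix.transpose_transpose]
  calc Xᵀ * X - Xᵀ * U * (Uᵀ * X)
      = Xᵀ * (U * Uᵀ + Uperp * Uperpᵀ) * X - Xᵀ * U * (Uᵀ * X) := by
        rw [hUsq, Matrix.mul_one]
    _ = Xᵀ * Uperp * (Uperpᵀ * X) := by
        simp only [Matrix.mul_add, Matrix.add_mul, Matrix.mul_assoc]
        abel

lemma split_psd {p : Type*} [Fintype p] [DecidableEq p] (X : Matrix p l ℝ) (V : Matrix l m ℝ)
    (Vperp : Matrix l n ℝ) (hVsq : V * Vᵀ + Vperp * Vperpᵀ = 1) :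
    X * Xᵀ - (X * V) * (X * V)ᵀ = (X * Vperp) * (X * Vperp)ᵀ := by
  rw [Matrix.transpose_mul, Matrix.transpose_mul]
  calc X * Xᵀ - X * V * (Vᵀ * Xᵀ)
      = X * (V * Vᵀ + Vperp * Vperpᵀ) * Xᵀ - X * V * (Vᵀ * Xᵀ) := by
        rw [hVsq, Matrix.mul_one]
    _ = X * Vperp * (Vperpᵀ * Xᵀ) := by
        simp only [Matrix.mul_add, Matrix.add_mul, Matrix.mul_assoc]
        abel

end NuclearNormAux

theorem stmt_18 {k l m m' n n' : Type*} [Fintype k] [Fintype l] [Fintype m] [Fintype m']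
    [Fintype n] [Fintype n'] [DecidableEq k] [DecidableEq l] [DecidableEq m]
    [DecidableEq m'] [DecidableEq n] [DecidableEq n']
    (U : Matrix k m ℝ) (Uperp : Matrix k m' ℝ)
    (V : Matrix l n ℝ) (Vperp : Matrix l n' ℝ)
    (M : Matrix m n ℝ) (Z : Matrix k l ℝ)
    (hU : Uᵀ * U = 1) (hUperp : Uperpᵀ * Uperp = 1) (hUo : Uᵀ * Uperp = 0)
    (hUsq : U * Uᵀ + Uperp * Uperpᵀ = 1)
    (hV : Vᵀ * V = 1) (hVperp : Vperpᵀ * Vperp = 1) (hVo : Vᵀ * Vperp = 0)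
    (hVsq : V * Vᵀ + Vperp * Vperpᵀ = 1)
    (hZ : Uᵀ * Z * V = M) (hnorm : nuclearNorm Z = nuclearNorm M) :
    Uᵀ * (Z - U * M * Vᵀ) * Vperp = 0 ∧
    Uperpᵀ * (Z - U * M * Vᵀ) * V = 0 ∧
    Uperpᵀ * (Z - U * M * Vᵀ) * Vperp = 0 := by
  have hUoT : Uperpᵀ * U = 0 := by
    have h := congrArg Matrix.transpose hUo
    rwa [Matrix.transpose_mul, Matrix.transpose_transpose, Matrix.transpose_zero] at h
  -- PSD facts
  have hpsd1 : (Zᵀ * Z - (Uᵀ * Z)ᵀ * (Uᵀ * Z)).PosSemidef := by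
    rw [split_psd' Z U Uperp hUsq]; exact psdTT _
  have hpsd2 : ((Uᵀ * Z) * (Uᵀ * Z)ᵀ - M * Mᵀ).PosSemidef := by
    rw [← hZ, split_psd (Uᵀ * Z) V Vperp hVsq]; exact psdTT' _
  -- nuclear norm as trace of sqrt
  have e0 : nuclearNorm Z = (psdTT Z).sqrt.trace := by rw [trace_sqrt]; rfl
  have eM : nuclearNorm M = (psdTT M).sqrt.trace := by rw [trace_sqrt]; rfl
  -- chain of inequalities
  have c1 : (psdTT (Uᵀ * Z)).sqrt.trace ≤ (psdTT Z).sqrt.trace :=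
    trace_sqrt_mono (psdTT (Uᵀ * Z)) (psdTT Z) hpsd1
  have c2 : (psdTT (Uᵀ * Z)).sqrt.trace = (psdTT' (Uᵀ * Z)).sqrt.trace := trace_sqrt_comm _
  have c3 : (psdTT' M).sqrt.trace ≤ (psdTT' (Uᵀ * Z)).sqrt.trace :=
    trace_sqrt_mono (psdTT' M) (psdTT' (Uᵀ * Z)) hpsd2
  have c4 : (psdTT M).sqrt.trace = (psdTT' M).sqrt.trace := trace_sqrt_comm M
  have hfix : (psdTT Z).sqrt.trace = (psdTT M).sqrt.trace := by rw [← e0, ← eM, hnorm]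
  -- rigidity
  have eq1 : (Uᵀ * Z)ᵀ * (Uᵀ * Z) = Zᵀ * Z :=
    trace_sqrt_rigid (psdTT (Uᵀ * Z)) (psdTT Z) hpsd1 (by linarith)
  have eq2 : M * Mᵀ = (Uᵀ * Z) * (Uᵀ * Z)ᵀ :=
    trace_sqrt_rigid (psdTT' M) (psdTT' (Uᵀ * Z)) hpsd2 (by linarith)
  -- extract the vanishing blocks
  have key2 : Uperpᵀ * Z = 0 := by
    apply tmse
    rw [← split_psd' Z U Uperp hUsq, eq1, sub_self]
  have key1 : (Uᵀ * Z) * Vperp = 0 := by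
    apply tmse'
    rw [← split_psd (Uᵀ * Z) V Vperp hVsq, hZ, eq2, sub_self]
  refine ⟨?_, ?_, ?_⟩
  · rw [Matrix.mul_sub, Matrix.sub_mul]
    simp only [← Matrix.mul_assoc]
    rw [hU, Matrix.one_mul, Matrix.mul_assoc M Vᵀ Vperp, hVo, Matrix.mul_zero, sub_zero]
    exact key1
  · rw [Matrix.mul_sub, Matrix.sub_mul]
    simp only [← Matrix.mul_assoc]
    rw [hUoT, Matrix.zero_mul, Matrix.zero_mul, Matrix.zero_mul, key2, Matrix.zero_mul, sub_zero]
  · rw [Matrix.mul_sub, Matrix.sub_mul]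
    simp only [← Matrix.mul_assoc]
    rw [hUoT, Matrix.zero_mul, Matrix.zero_mul, Matrix.zero_mul, key2, Matrix.zero_mul, sub_zero]
end
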